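/- Fix λ > 0, z > 0, t > 0. Define, for x ≠ z, P_t f(x) = Φ(λ√t − |z−x|/√t) − exp(2λ|z−x|)·Φ(−λ√t − |z−x|/√t) + exp((3/2)λ²t + λ(|z−x| − 2(z−x)))·[Φ((z−x)/√t − 2λ√t) + exp(−4λ(x−z))·Φ(−(z−x)/√t − 2λ√t)], and P_t f(z) = 1. Then lim_{x→z} P_t f(x) = 2Φ(λ√t) − 1 + 2·exp((3/2)λ²t)·Φ(−2λ√t), and this limit is strictly less than 1 = P_t f(z); hence x ↦ P_t f(x) is discontinuous at z. -/
import Mathlib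


open MeasureTheory Real Filter

/-- Standard normal cumulative distribution function. -/
noncomputable def Phi (x : ℝ) : ℝ :=
  ∫ u in Set.Iic x, Real.exp (-u ^ 2 / 2) / Real.sqrt (2 * Real.pi)

/-- The semigroup of the stopped drifted Brownian motion applied to
`f(x) = exp(−λ|x−z|)`. -/
noncomputable def Ptf (lam z t x : ℝ) : ℝ :=
  if x = z then 1
  else
    Phi (lam * Real.sqrt t - |z - x| / Real.sqrt t)
      - Real.exp (2 * lam * |z - x|) * Phi (-(lam * Real.sqrt t) - |z - x| / Real.sqrt t)
      + Real.exp ((3 / 2) * lam ^ 2 * t + lam * (|z - x| - 2 * (z - x))) *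
        (Phi ((z - x) / Real.sqrt t - 2 * lam * Real.sqrt t)
          + Real.exp (-(4 * lam * (x - z))) *
            Phi (-((z - x) / Real.sqrt t) - 2 * lam * Real.sqrt t))

open Set

lemma gauss_integrable : Integrable (fun u : ℝ => Real.exp (-u ^ 2 / 2) / Real.sqrt (2 * Real.pi)) := by
  have h : (fun u : ℝ => Real.exp (-u ^ 2 / 2) / Real.sqrt (2 * Real.pi))
      = fun u : ℝ => Real.exp (-(1/2) * u ^ 2) * (Real.sqrt (2 * Real.pi))⁻¹ := by
    funext u; rw [div_eq_mul_inv]; ring_nf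
  rw [h]
  exact (integrable_exp_neg_mul_sq (by norm_num)).mul_const _

lemma gauss_total : (∫ u : ℝ, Real.exp (-u ^ 2 / 2) / Real.sqrt (2 * Real.pi)) = 1 := by
  have h : (fun u : ℝ => Real.exp (-u ^ 2 / 2) / Real.sqrt (2 * Real.pi))
      = fun u : ℝ => Real.exp (-(1/2) * u ^ 2) * (Real.sqrt (2 * Real.pi))⁻¹ := by
    funext u; rw [div_eq_mul_inv]; ring_nf
  rw [h, integral_mul_const, integral_gaussian]
  rw [show Real.pi / (1/2) = 2 * Real.pi by ring]
  rw [mul_inv_cancel₀]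
  positivity

lemma Phi_neg (x : ℝ) : Phi (-x) = 1 - Phi x := by
  have hsym : (∫ u in Iic (-x), Real.exp (-u ^ 2 / 2) / Real.sqrt (2 * Real.pi))
      = ∫ u in Ioi x, Real.exp (-u ^ 2 / 2) / Real.sqrt (2 * Real.pi) := by
    rw [← integral_comp_neg_Ioi]
    simp [neg_pow]
  have hadd := integral_add_compl (measurableSet_Iic (a := x)) gauss_integrable
  rw [compl_Iic] at hadd
  rw [Phi, hsym]
  rw [gauss_total] at hadd
  unfold Phi
  linarith

lemma Phi_continuous : Continuous Phi := by
  have h : Phi = fun x : ℝ =>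
      Phi 0 + ∫ u in (0:ℝ)..x, Real.exp (-u ^ 2 / 2) / Real.sqrt (2 * Real.pi) := by
    funext x
    rw [← intervalIntegral.integral_Iic_sub_Iic gauss_integrable.integrableOn
      gauss_integrable.integrableOn]
    unfold Phi; ring
  rw [h]
  exact continuous_const.add (intervalIntegral.continuous_primitive
    (fun a b => gauss_integrable.intervalIntegrable) 0)

lemma key_ineq {a : ℝ} (ha : 0 < a) :
    Real.exp (3 / 2 * a ^ 2) * Phi (-(2 * a)) < 1 - Phi a := by
  set s := Real.sqrt (2 * Real.pi) with hs
  have hspos : 0 < s := Real.sqrt_pos.mpr (by positivity)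
  set c := Real.exp (3 / 2 * a ^ 2) with hc
  set g : ℝ → ℝ := fun u => Real.exp (-u ^ 2 / 2) / s with hg
  have hcg : ∀ w : ℝ, c * g (w - a) = Real.exp (3/2 * a^2 + -(w - a) ^ 2 / 2) / s := by
    intro w
    simp only [hg, hc]; rw [Real.exp_add]; ring
  -- step 1 : c * Phi (-(2a)) = ∫ w in Iic (-a), c * g (w - a)
  have step1 : c * Phi (-(2 * a)) = ∫ w in Iic (-a), c * g (w - a) := by
    have hind : ∀ w : ℝ, (Iic (-a)).indicator (fun w => c * g (w - a)) w
        = (Iic (-(2*a))).indicator (fun u => c * g u) (w - a) := by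
      intro w
      by_cases hw : w ≤ -a
      · rw [Set.indicator_of_mem (mem_Iic.mpr hw),
          Set.indicator_of_mem (mem_Iic.mpr (by linarith))]
      · rw [Set.indicator_of_notMem (fun h => hw (mem_Iic.mp h)),
          Set.indicator_of_notMem (fun h => hw (by have := mem_Iic.mp h; linarith))]
    have hPhi2 : Phi (-(2 * a)) = ∫ u in Iic (-(2*a)), g u := rfl
    rw [hPhi2, ← integral_const_mul, ← integral_indicator measurableSet_Iic,
      ← integral_sub_right_eq_self (fun w => (Iic (-(2*a))).indicator (fun u => c * g u) w) a]
    have heq : (fun w => (Iic (-(2*a))).indicator (fun u => c * g u) (w - a))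
        = (Iic (-a)).indicator (fun w => c * g (w - a)) := funext fun w => (hind w).symm
    rw [heq, integral_indicator measurableSet_Iic]
  -- integrability
  have hInt1 : IntegrableOn g (Iic (-a)) := gauss_integrable.integrableOn
  have hInt2 : IntegrableOn (fun w => c * g (w - a)) (Iic (-a)) :=
    ((gauss_integrable.comp_sub_right a).const_mul c).integrableOn
  -- pointwise inequalities
  have hpt : ∀ w : ℝ, w ≤ -a → c * g (w - a) ≤ g w := by
    intro w hw
    have hgw : g w = Real.exp (-w ^ 2 / 2) / s := rfl
    rw [hcg, hgw]
    gcongr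
    nlinarith [mul_nonneg ha.le (by linarith : (0:ℝ) ≤ -(a + w))]
  have hptlt : ∀ w : ℝ, w < -a → c * g (w - a) < g w := by
    intro w hw
    have hgw : g w = Real.exp (-w ^ 2 / 2) / s := rfl
    rw [hcg, hgw]
    apply div_lt_div_of_pos_right ?_ hspos
    exact Real.exp_lt_exp.mpr (by nlinarith [mul_pos ha (by linarith : (0:ℝ) < -(a + w))])
  -- positivity of the difference integral
  have hpos : 0 < ∫ w in Iic (-a), (g w - c * g (w - a)) := by
    rw [setIntegral_pos_iff_support_of_nonneg_ae
      ((ae_restrict_iff' measurableSet_Iic).mpr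
        (ae_of_all _ fun w hw => sub_nonneg.mpr (hpt w (mem_Iic.mp hw))))
      (hInt1.sub hInt2)]
    refine lt_of_lt_of_le ?_ (measure_mono (?_ : Iio (-a) ⊆ _))
    · rw [Real.volume_Iio]; exact ENNReal.zero_lt_top
    · intro w hw
      refine ⟨ne_of_gt (sub_pos.mpr (hptlt w hw)), mem_Iic.mpr (le_of_lt hw)⟩
  have hsub : (∫ w in Iic (-a), (g w - c * g (w - a)))
      = Phi (-a) - c * Phi (-(2 * a)) := by
    rw [integral_sub hInt1 hInt2, step1]; rfl
  rw [hsub] at hpos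
  have := Phi_neg a
  linarith

theorem stmt_15 (lam z t : ℝ) (hlam : 0 < lam) (hz : 0 < z) (ht : 0 < t) :
    Tendsto (fun x : ℝ => Ptf lam z t x) (nhdsWithin z {z}ᶜ)
        (nhds (2 * Phi (lam * Real.sqrt t) - 1 +
          2 * Real.exp ((3 / 2) * lam ^ 2 * t) * Phi (-(2 * lam * Real.sqrt t)))) ∧
      2 * Phi (lam * Real.sqrt t) - 1 +
          2 * Real.exp ((3 / 2) * lam ^ 2 * t) * Phi (-(2 * lam * Real.sqrt t)) <
        Ptf lam z t z := by
  have hA : 0 < lam * Real.sqrt t := mul_pos hlam (Real.sqrt_pos.mpr ht)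
  set gfun : ℝ → ℝ := fun x =>
    Phi (lam * Real.sqrt t - |z - x| / Real.sqrt t)
      - Real.exp (2 * lam * |z - x|) * Phi (-(lam * Real.sqrt t) - |z - x| / Real.sqrt t)
      + Real.exp ((3 / 2) * lam ^ 2 * t + lam * (|z - x| - 2 * (z - x))) *
        (Phi ((z - x) / Real.sqrt t - 2 * lam * Real.sqrt t)
          + Real.exp (-(4 * lam * (x - z))) *
            Phi (-((z - x) / Real.sqrt t) - 2 * lam * Real.sqrt t)) with hgfun
  constructor
  · have hst : Continuous fun x : ℝ => z - x := continuous_const.sub continuous_id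
    have habs : Continuous fun x : ℝ => |z - x| := hst.abs
    have hP := Phi_continuous
    have hcont : Continuous gfun := by
      rw [hgfun]
      refine Continuous.add (Continuous.sub ?_ ?_) (Continuous.mul ?_ (Continuous.add ?_ ?_))
      · exact hP.comp (continuous_const.sub (habs.div_const _))
      · exact (Real.continuous_exp.comp (continuous_const.mul habs)).mul
          (hP.comp (continuous_const.sub (habs.div_const _)))
      · exact Real.continuous_exp.comp (continuous_const.add
          (continuous_const.mul (habs.sub (continuous_const.mul hst))))
      · exact hP.comp ((hst.div_const _).sub continuous_const)
      · exact (Real.continuous_exp.comp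
            ((continuous_const.mul (continuous_id.sub continuous_const)).neg)).mul
          (hP.comp ((hst.div_const _).neg.sub continuous_const))
    have hval : gfun z = 2 * Phi (lam * Real.sqrt t) - 1 +
        2 * Real.exp ((3 / 2) * lam ^ 2 * t) * Phi (-(2 * lam * Real.sqrt t)) := by
      rw [hgfun]
      simp only [sub_self, abs_zero, zero_div, sub_zero, mul_zero, Real.exp_zero, one_mul,
        zero_sub, neg_zero, add_zero]
      rw [Phi_neg (lam * Real.sqrt t)]
      ring
    have h1 : Tendsto gfun (nhdsWithin z {z}ᶜ)
        (nhds (2 * Phi (lam * Real.sqrt t) - 1 +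
          2 * Real.exp ((3 / 2) * lam ^ 2 * t) * Phi (-(2 * lam * Real.sqrt t)))) := by
      rw [← hval]
      exact (hcont.tendsto z).mono_left nhdsWithin_le_nhds
    refine h1.congr' ?_
    filter_upwards [self_mem_nhdsWithin] with x hx
    rw [Ptf, if_neg (Set.mem_compl_singleton_iff.mp hx)]
  · have key := key_ineq hA
    have hct : (3 / 2 : ℝ) * lam ^ 2 * t = 3 / 2 * (lam * Real.sqrt t) ^ 2 := by
      rw [mul_pow, Real.sq_sqrt ht.le]; ring
    have h2a : -(2 * (lam * Real.sqrt t)) = -(2 * lam * Real.sqrt t) := by ring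
    rw [h2a] at key
    rw [show Ptf lam z t z = 1 from by rw [Ptf, if_pos rfl], hct]
    linarith
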